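/- Let X be a compact Hausdorff topological space in which every open subset is an Fσ-set (i.e., X is perfectly normal compact). Then X is metrizable if and only if X is weakly homeomorphic to a metrizable topological space. -/

import Mathlib

/-!
A weakly discontinuous map on a hereditarily Lindelöf space is σ-continuous: the open sets
covered by countably many sets of continuity have a largest element, which is everything,
since otherwise weak discontinuity on its complement enlarges it. A perfectly normal compact
space is hereditarily Lindelöf, so a weak homeomorphism `f : X → Y` onto a metrizable `Y` makes
`Y` a countable union of continuous images of Lindelöf sets, hence hereditarily Lindelöf and
second countable. Then `f⁻¹` is σ-continuous too, and the images of basic open sets under its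
pieces of continuity form a countable network of `X`. A compact Hausdorff space with a countable
network is second countable, hence metrizable.
-/

open Set Function Topology

/-- A map `f : X → Y` is weakly discontinuous if every nonempty subset `A ⊆ X`
contains a nonempty subset `U`, open in the subspace topology of `A`, on which
`f` restricts to a continuous map. -/
def WeaklyDiscontinuous {X Y : Type*} [TopologicalSpace X] [TopologicalSpace Y]
    (f : X → Y) : Prop :=
  ∀ A : Set X, A.Nonempty → ∃ U : Set X, U ⊆ A ∧ U.Nonempty ∧
    (∃ V : Set X, IsOpen V ∧ U = A ∩ V) ∧ ContinuousOn f U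

/-- Topological spaces `X` and `Y` are weakly homeomorphic if there is a bijection
`f : X → Y` such that both `f` and its inverse are weakly discontinuous. -/
def WeaklyHomeomorphic (X : Type*) (Y : Type*) [TopologicalSpace X] [TopologicalSpace Y] :
    Prop :=
  ∃ (f : X → Y) (g : Y → X), Function.LeftInverse g f ∧ Function.RightInverse g f ∧
    WeaklyDiscontinuous f ∧ WeaklyDiscontinuous g

open TopologicalSpace

section

variable {X Y : Type*} [TopologicalSpace X] [TopologicalSpace Y]

theorem Continuous.weaklyDiscontinuous {f : X → Y} (hf : Continuous f) :
    WeaklyDiscontinuous f :=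
  fun A hA => ⟨A, subset_rfl, hA, ⟨univ, isOpen_univ, (inter_univ A).symm⟩, hf.continuousOn⟩

theorem WeaklyHomeomorphic.refl (X : Type*) [TopologicalSpace X] : WeaklyHomeomorphic X X :=
  ⟨id, id, fun _ => rfl, fun _ => rfl, continuous_id.weaklyDiscontinuous,
    continuous_id.weaklyDiscontinuous⟩

def IsSigmaContinuous (f : X → Y) : Prop :=
  ∃ S : Set (Set X), S.Countable ∧ ⋃₀ S = univ ∧ ∀ s ∈ S, ContinuousOn f s

def IsNetwork (N : Set (Set X)) : Prop :=
  ∀ x O, IsOpen O → x ∈ O → ∃ n ∈ N, x ∈ n ∧ n ⊆ O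

theorem WeaklyDiscontinuous.isSigmaContinuous [HereditarilyLindelofSpace X] {f : X → Y}
    (hf : WeaklyDiscontinuous f) : IsSigmaContinuous f := by
  set 𝒰 : Set (Set X) :=
    {V | IsOpen V ∧ ∃ S : Set (Set X), S.Countable ∧ V ⊆ ⋃₀ S ∧ ∀ s ∈ S, ContinuousOn f s}
  choose S hSc hVS hScont using fun V : 𝒰 => V.2.2
  obtain ⟨t, htc, ht⟩ := eq_open_union_countable (fun V : 𝒰 => (V : Set X)) fun V => V.2.1
  set S₀ := ⋃ V ∈ t, S V
  have hS₀c : S₀.Countable := htc.biUnion fun V _ => hSc V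
  have hS₀cont : ∀ s ∈ S₀, ContinuousOn f s := by
    intro s hs
    obtain ⟨V, -, hsV⟩ := mem_iUnion₂.1 hs
    exact hScont V s hsV
  have h𝒰S₀ : ∀ V ∈ 𝒰, V ⊆ ⋃₀ S₀ := by
    intro V hV x hxV
    obtain ⟨W, hW, hxW⟩ := mem_iUnion₂.1 (ht.symm.subset (mem_iUnion.2 ⟨⟨V, hV⟩, hxV⟩))
    obtain ⟨s, hs, hxs⟩ := hVS W hxW
    exact ⟨s, mem_iUnion₂.2 ⟨W, hW, hs⟩, hxs⟩
  refine ⟨S₀, hS₀c, ?_, hS₀cont⟩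
  by_contra hne
  obtain ⟨U, -, ⟨x, hxU⟩, ⟨V, hV, rfl⟩, hUcont⟩ := hf _ (nonempty_compl.2 hne)
  have hV𝒰 : V ∈ 𝒰 := by
    refine ⟨hV, insert ((⋃₀ S₀)ᶜ ∩ V) S₀, hS₀c.insert _, ?_, ?_⟩
    · intro y hyV
      by_cases hy : y ∈ ⋃₀ S₀
      · exact sUnion_mono (subset_insert _ _) hy
      · exact ⟨_, mem_insert _ _, hy, hyV⟩
    · exact forall_mem_insert.2 ⟨hUcont, hS₀cont⟩
  exact hxU.1 (h𝒰S₀ V hV𝒰 hxU.2)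

theorem IsSigmaContinuous.hereditarilyLindelofSpace [HereditarilyLindelofSpace X] {f : X → Y}
    (hf : IsSigmaContinuous f) (hsurj : Surjective f) : HereditarilyLindelofSpace Y := by
  obtain ⟨S, hSc, hSU, hScont⟩ := hf
  refine .of_forall_isOpen fun T _ => ?_
  have hT : T = ⋃ s ∈ S, f '' (f ⁻¹' T ∩ s) := by
    rw [← image_iUnion₂, ← inter_iUnion₂, ← sUnion_eq_biUnion, hSU, inter_univ,
      image_preimage_eq T hsurj]
  rw [hT]
  exact hSc.isLindelof_biUnion fun s hs =>
    (HereditarilyLindelofSpace.isLindelof _).image_of_continuousOn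
      ((hScont s hs).mono inter_subset_right)

theorem IsSigmaContinuous.exists_countable_isNetwork [SecondCountableTopology X] {f : X → Y}
    (hf : IsSigmaContinuous f) (hsurj : Surjective f) :
    ∃ N : Set (Set Y), N.Countable ∧ IsNetwork N := by
  obtain ⟨S, hSc, hSU, hScont⟩ := hf
  refine ⟨(fun p : Set X × Set X => f '' (p.1 ∩ p.2)) '' (countableBasis X ×ˢ S),
    ((countable_countableBasis X).prod hSc).image _, ?_⟩
  intro y O hO hyO
  obtain ⟨x, rfl⟩ := hsurj y
  obtain ⟨s, hs, hxs⟩ : x ∈ ⋃₀ S := hSU ▸ mem_univ x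
  obtain ⟨W, hW, hxW, hWs⟩ :=
    mem_nhdsWithin.1 ((hScont s hs x hxs).preimage_mem_nhdsWithin (hO.mem_nhds hyO))
  obtain ⟨B, hB, hxB, hBW⟩ :=
    (isBasis_countableBasis X).exists_subset_of_mem_open hxW hW
  refine ⟨f '' (B ∩ s), ⟨(B, s), mk_mem_prod hB hs, rfl⟩, ⟨x, ⟨hxB, hxs⟩, rfl⟩, ?_⟩
  rintro _ ⟨y, ⟨hyB, hys⟩, rfl⟩
  exact hWs ⟨hBW hyB, hys⟩

theorem IsNetwork.exists_mem_closure_subset [RegularSpace X] {N : Set (Set X)} (hN : IsNetwork N)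
    {x : X} {O : Set X} (hO : IsOpen O) (hxO : x ∈ O) : ∃ n ∈ N, x ∈ n ∧ closure n ⊆ O := by
  obtain ⟨C, hC, hCc, hCO⟩ := exists_mem_nhds_isClosed_subset (hO.mem_nhds hxO)
  obtain ⟨n, hn, hxn, hnC⟩ := hN x (interior C) isOpen_interior (mem_interior_iff_mem_nhds.2 hC)
  exact ⟨n, hn, hxn, (closure_minimal (hnC.trans interior_subset) hCc).trans hCO⟩

theorem IsNetwork.exists_disjoint_closure [T2Space X] [RegularSpace X] {N : Set (Set X)}
    (hN : IsNetwork N) {x y : X} (hxy : x ≠ y) :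
    ∃ m ∈ N, ∃ n ∈ N, x ∈ m ∧ y ∈ n ∧ Disjoint (closure m) (closure n) := by
  obtain ⟨G, H, hG, hH, hxG, hyH, hGH⟩ := t2_separation hxy
  obtain ⟨m, hm, hxm, hmG⟩ := hN.exists_mem_closure_subset hG hxG
  obtain ⟨n, hn, hyn, hnH⟩ := hN.exists_mem_closure_subset hH hyH
  exact ⟨m, hm, n, hn, hxm, hyn, hGH.mono hmG hnH⟩

/-- The basis consists of finite intersections of the sets `U (m, n)`, open neighbourhoods of
`closure m` disjoint from neighbourhoods `V (m, n)` of `closure n`; compactness of `Oᶜ` makes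
finitely many of them suffice to cut out `O` around `x`. -/
theorem secondCountableTopology_of_isNetwork [CompactSpace X] [T2Space X] {N : Set (Set X)}
    (hNc : N.Countable) (hN : IsNetwork N) : SecondCountableTopology X := by
  set P : Set (Set X × Set X) := {p | p.1 ∈ N ∧ p.2 ∈ N ∧ Disjoint (closure p.1) (closure p.2)}
  have hPc : P.Countable := (hNc.prod hNc).mono fun p hp => mk_mem_prod hp.1 hp.2.1
  choose! U V hU hV hUp hVp hUV using fun p (hp : p ∈ P) =>
    normal_separation isClosed_closure isClosed_closure hp.2.2
  set B : Set (Set X) := (fun t => ⋂ p ∈ t, U p) '' {t | t.Finite ∧ t ⊆ P}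
  have hBc : B.Countable := (countable_ofPred_finite_subset hPc).image _
  have hBopen : ∀ b ∈ B, IsOpen b := by
    rintro _ ⟨t, ⟨htf, htP⟩, rfl⟩
    exact htf.isOpen_biInter fun p hp => hU p (htP hp)
  refine (isTopologicalBasis_of_isOpen_of_nhds hBopen fun x O hxO hO => ?_)
    |>.secondCountableTopology hBc
  have hcover : Oᶜ ⊆ ⋃ p ∈ {p | p ∈ P ∧ x ∈ p.1}, V p := by
    intro y hy
    obtain ⟨m, hm, n, hn, hxm, hyn, hmn⟩ := hN.exists_disjoint_closure (ne_of_mem_of_not_mem hxO hy)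
    exact mem_iUnion₂.2 ⟨(m, n), ⟨⟨hm, hn, hmn⟩, hxm⟩, hVp _ ⟨hm, hn, hmn⟩ (subset_closure hyn)⟩
  obtain ⟨t, htsub, htf, htcov⟩ := hO.isClosed_compl.isCompact.elim_finite_subcover_image
    (fun p hp => hV p hp.1) hcover
  refine ⟨⋂ p ∈ t, U p, ⟨t, ⟨htf, fun p hp => (htsub hp).1⟩, rfl⟩,
    mem_iInter₂.2 fun p hp => hUp p (htsub hp).1 (subset_closure (htsub hp).2), fun z hz => ?_⟩
  by_contra hzO
  obtain ⟨p, hp, hzp⟩ := mem_iUnion₂.1 (htcov hzO)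
  exact (hUV p (htsub hp).1).ne_of_mem (mem_iInter₂.1 hz p hp) hzp rfl

end

universe u

theorem perfectlyNormal_compact_metrizable_iff
    {X : Type u} [TopologicalSpace X] [CompactSpace X] [T2Space X]
    (hFsigma : ∀ U : Set X, IsOpen U →
      ∃ C : ℕ → Set X, (∀ n, IsClosed (C n)) ∧ U = ⋃ n, C n) :
    TopologicalSpace.MetrizableSpace X ↔
      ∃ (Y : Type u) (tY : TopologicalSpace Y),
        TopologicalSpace.MetrizableSpace Y ∧ WeaklyHomeomorphic X Y := by
  refine ⟨fun hX => ⟨X, _, hX, .refl X⟩, ?_⟩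
  rintro ⟨Y, _, hY, f, g, hgf, hfg, hf, hg⟩
  have : HereditarilyLindelofSpace X := .of_forall_isOpen fun U hU => by
    obtain ⟨C, hC, rfl⟩ := hFsigma U hU
    exact isLindelof_iUnion fun n => (hC n).isCompact.isLindelof
  have : HereditarilyLindelofSpace Y :=
    hf.isSigmaContinuous.hereditarilyLindelofSpace hfg.surjective
  obtain ⟨N, hNc, hN⟩ := hg.isSigmaContinuous.exists_countable_isNetwork hgf.surjective
  have := secondCountableTopology_of_isNetwork hNc hN
  infer_instance
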